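/- Let |v⟩ = c|0⟩ + s|1⟩ and |v^⊥⟩ = s̄|0⟩ − c̄|1⟩ with |c|² + |s|² = 1 and s ≠ 0, and let ψ = |1⟩⊗|v^⊥⟩. Define the n-qubit states g₀ = |v⟩^{⊗n} and, for 1 ≤ i ≤ n, g_i = |0⟩^{⊗(i−1)} ⊗ |v^⊥⟩ ⊗ |v⟩^{⊗(n−i)}. Then g₀, g₁, …, g_n form an orthonormal basis of the kernel of H_n(ψ); in particular this kernel has dimension n+1 and the smallest eigenvalue of H_n(ψ) is zero. -/

import Mathlib

/-!
Every term `|ψ⟩⟨ψ|_{i,i+1}` is positive semidefinite, so `f` lies in the kernel of `H_n(ψ)` iff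
its contraction with `ψ` on each adjacent pair vanishes; for `ψ = |1⟩ ⊗ |v^⊥⟩` this says
`s f(…10…) = c f(…11…)`. Each `g_m` satisfies it, since in `g_m` either site `i` is `|0⟩` or
site `i+1` is `|v⟩ ⟂ |v^⊥⟩`. Conversely, as `s ≠ 0`, the relation moves every descent `10` to `11`,
so a kernel vector is determined by its values on the `n+1` sorted configurations `0^k 1^(n-k)`.
Hence the kernel has dimension at most `n+1` and is spanned by the orthonormal family `g_m`.
-/

open scoped BigOperators
open Matrix Polynomial

noncomputable section

/-- A two-site operator `A` applied to qubits `i` and `j` of an `n`-qubit chain,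
acting as the identity on the remaining qubits. -/
def twoSite (n : ℕ) (A : Matrix (Fin 2 × Fin 2) (Fin 2 × Fin 2) ℂ) (i j : Fin n) :
    Matrix (Fin n → Fin 2) (Fin n → Fin 2) ℂ :=
  fun x y => A (x i, x j) (y i, y j) *
    ∏ k : Fin n, if k = i ∨ k = j then 1 else (if x k = y k then 1 else 0)

/-- The rank-one projector `|ψ⟩⟨ψ|` onto a two-qubit state `ψ`. -/
def vecProj (ψ : Fin 2 × Fin 2 → ℂ) : Matrix (Fin 2 × Fin 2) (Fin 2 × Fin 2) ℂ :=
  fun a b => ψ a * star (ψ b)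

/-- Open-boundary chain Hamiltonian with (possibly) site-dependent forbidden states:
`H_n(ψ₁,…,ψ_{n-1}) = Σ_j |ψ_j⟩⟨ψ_j|_{j,j+1}` (here `ψs` is 0-indexed). -/
def HnGen (n : ℕ) (ψs : ℕ → Fin 2 × Fin 2 → ℂ) :
    Matrix (Fin n → Fin 2) (Fin n → Fin 2) ℂ :=
  ∑ i : Fin n,
    if h : (i : ℕ) + 1 < n then twoSite n (vecProj (ψs (i : ℕ))) i ⟨(i : ℕ) + 1, h⟩ else 0

/-- Translation-invariant open-boundary Hamiltonian `H_n(ψ)`. -/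
def Hn (n : ℕ) (ψ : Fin 2 × Fin 2 → ℂ) : Matrix (Fin n → Fin 2) (Fin n → Fin 2) ℂ :=
  HnGen n fun _ => ψ

/-- The product forbidden state `ψ = |1⟩ ⊗ |v^⊥⟩` where `v = c|0⟩ + s|1⟩` and
`v^⊥ = s̄|0⟩ − c̄|1⟩`. -/
def psiProd (c s : ℂ) : Fin 2 × Fin 2 → ℂ :=
  fun p => (![0, 1] : Fin 2 → ℂ) p.1 * (![star s, -star c] : Fin 2 → ℂ) p.2

/-- The domain-wall states: `gvec c s n 0 = |v⟩^{⊗n}` and, for `1 ≤ i ≤ n`,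
`gvec c s n i = |0⟩^{⊗(i−1)} ⊗ |v^⊥⟩ ⊗ |v⟩^{⊗(n−i)}`. -/
def gvec (c s : ℂ) (n : ℕ) (i : ℕ) : (Fin n → Fin 2) → ℂ :=
  fun x => ∏ k : Fin n,
    if (k : ℕ) + 1 < i then (![1, 0] : Fin 2 → ℂ) (x k)
    else if (k : ℕ) + 1 = i then (![star s, -star c] : Fin 2 → ℂ) (x k)
    else (![c, s] : Fin 2 → ℂ) (x k)

open Matrix Finset
open scoped ComplexOrder

section TwoSite

variable {n : ℕ}

def update₂ (x : Fin n → Fin 2) (i j : Fin n) (p : Fin 2 × Fin 2) : Fin n → Fin 2 :=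
  Function.update (Function.update x i p.1) j p.2

theorem update₂_apply (x : Fin n → Fin 2) (i j : Fin n) (p : Fin 2 × Fin 2) (k : Fin n) :
    update₂ x i j p k = if k = j then p.2 else if k = i then p.1 else x k := by
  simp only [update₂, Function.update_apply]

theorem update₂_update₂ (x : Fin n → Fin 2) (i j : Fin n) (p q : Fin 2 × Fin 2) :
    update₂ (update₂ x i j q) i j p = update₂ x i j p := by
  ext1 k
  simp only [update₂_apply]
  split_ifs <;> rfl

theorem update₂_self (x : Fin n → Fin 2) (i j : Fin n) : update₂ x i j (x i, x j) = x := by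
  ext1 k
  simp only [update₂_apply]
  split_ifs <;> simp_all

theorem update₂_injective (x : Fin n → Fin 2) {i j : Fin n} (hij : i ≠ j) :
    Function.Injective (update₂ x i j) := fun p q h => by
  have hi := congrFun h i
  have hj := congrFun h j
  simp only [update₂_apply, if_neg hij] at hi hj
  exact Prod.ext hi hj

variable {A B : Matrix (Fin 2 × Fin 2) (Fin 2 × Fin 2) ℂ} {i j : Fin n}

theorem twoSite_apply_update₂ (hij : i ≠ j) (x : Fin n → Fin 2) (p : Fin 2 × Fin 2) :
    twoSite n A i j x (update₂ x i j p) = A (x i, x j) p := by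
  rw [twoSite, Finset.prod_eq_one, mul_one]
  · simp [update₂_apply, hij]
  · intro k _
    split_ifs <;> simp_all [update₂_apply]

theorem twoSite_apply_eq_zero {x y : Fin n → Fin 2} (hy : y ∉ Set.range (update₂ x i j)) :
    twoSite n A i j x y = 0 := by
  obtain ⟨k, hk⟩ : ∃ k, update₂ x i j (y i, y j) k ≠ y k := by
    by_contra! h
    exact hy ⟨_, funext h⟩
  rw [twoSite, Finset.prod_eq_zero (mem_univ k), mul_zero]
  rw [update₂_apply] at hk
  split_ifs at hk ⊢ <;> simp_all

theorem twoSite_mulVec (hij : i ≠ j) (f : (Fin n → Fin 2) → ℂ) (x : Fin n → Fin 2) :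
    (twoSite n A i j *ᵥ f) x = ∑ p, A (x i, x j) p * f (update₂ x i j p) :=
  (Fintype.sum_of_injective _ (update₂_injective x hij) _ _
    (fun y hy => by dsimp only; rw [twoSite_apply_eq_zero hy, zero_mul])
    (fun p => by dsimp only; rw [twoSite_apply_update₂ hij])).symm

theorem twoSite_mul (hij : i ≠ j) : twoSite n (A * B) i j = twoSite n A i j * twoSite n B i j := by
  refine ext_iff_mulVec.mpr fun f => funext fun x => ?_
  rw [← mulVec_mulVec, twoSite_mulVec hij, twoSite_mulVec hij]
  simp only [twoSite_mulVec hij, update₂_update₂, update₂_apply, if_neg hij,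
    mul_apply, Finset.sum_mul, Finset.mul_sum, mul_assoc]
  exact Finset.sum_comm

theorem twoSite_conjTranspose : (twoSite n A i j)ᴴ = twoSite n Aᴴ i j := by
  ext x y
  simp [twoSite, conjTranspose_apply, star_prod, apply_ite star, eq_comm]

open scoped MatrixOrder in
theorem Matrix.PosSemidef.twoSite (hA : A.PosSemidef) (hij : i ≠ j) :
    (twoSite n A i j).PosSemidef := by
  obtain ⟨B, rfl⟩ := CStarAlgebra.nonneg_iff_eq_star_mul_self.mp hA.nonneg
  rw [twoSite_mul hij, star_eq_conjTranspose, ← twoSite_conjTranspose]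
  exact posSemidef_conjTranspose_mul_self _

end TwoSite

theorem Matrix.PosSemidef.sum_mulVec_eq_zero_iff {ι m 𝕜 : Type*} [RCLike 𝕜] [Fintype m]
    {A : ι → Matrix m m 𝕜} {s : Finset ι} (hA : ∀ i ∈ s, (A i).PosSemidef) (v : m → 𝕜) :
    (∑ i ∈ s, A i) *ᵥ v = 0 ↔ ∀ i ∈ s, A i *ᵥ v = 0 := by
  rw [← (posSemidef_sum s hA).dotProduct_mulVec_zero_iff, sum_mulVec, dotProduct_sum,
    Finset.sum_eq_zero_iff_of_nonneg fun i hi => (hA i hi).dotProduct_mulVec_nonneg v]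
  exact forall₂_congr fun i hi => (hA i hi).dotProduct_mulVec_zero_iff v

theorem Matrix.zero_mem_spectrum_of_mulVec_eq_zero {K m : Type*} [Field K] [Fintype m]
    [DecidableEq m] {A : Matrix m m K} {v : m → K} (hv : v ≠ 0) (hAv : A *ᵥ v = 0) :
    (0 : K) ∈ spectrum K A := by
  rw [spectrum.zero_mem_iff, isUnit_iff_isUnit_det, isUnit_iff_ne_zero, not_not]
  exact exists_mulVec_eq_zero_iff.mp ⟨v, hv, hAv⟩

theorem posSemidef_vecProj (ψ : Fin 2 × Fin 2 → ℂ) : (vecProj ψ).PosSemidef :=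
  posSemidef_vecMulVec_self_star ψ

section Contraction

variable {n : ℕ}

def contractPair (ψ : Fin 2 × Fin 2 → ℂ) (f : (Fin n → Fin 2) → ℂ) (i j : Fin n)
    (x : Fin n → Fin 2) : ℂ :=
  ∑ p, star (ψ p) * f (update₂ x i j p)

theorem contractPair_update₂ (ψ : Fin 2 × Fin 2 → ℂ) (f : (Fin n → Fin 2) → ℂ) (i j : Fin n)
    (x : Fin n → Fin 2) (p : Fin 2 × Fin 2) :
    contractPair ψ f i j (update₂ x i j p) = contractPair ψ f i j x := by
  simp only [contractPair, update₂_update₂]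

theorem twoSite_vecProj_mulVec (ψ : Fin 2 × Fin 2 → ℂ) {i j : Fin n} (hij : i ≠ j)
    (f : (Fin n → Fin 2) → ℂ) (x : Fin n → Fin 2) :
    (twoSite n (vecProj ψ) i j *ᵥ f) x = ψ (x i, x j) * contractPair ψ f i j x := by
  simp only [twoSite_mulVec hij, vecProj, contractPair, Finset.mul_sum, mul_assoc]

theorem contractPair_eq_zero_of_twoSite_mulVec {ψ : Fin 2 × Fin 2 → ℂ} (hψ : ψ ≠ 0)
    {i j : Fin n} (hij : i ≠ j) {f : (Fin n → Fin 2) → ℂ}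
    (hf : twoSite n (vecProj ψ) i j *ᵥ f = 0) (x : Fin n → Fin 2) :
    contractPair ψ f i j x = 0 := by
  obtain ⟨p, hp⟩ := Function.ne_iff.mp hψ
  have h := congrFun hf (update₂ x i j p)
  simp only [twoSite_vecProj_mulVec ψ hij, contractPair_update₂, update₂_apply, if_neg hij,
    Pi.zero_apply] at h
  exact (mul_eq_zero.mp h).resolve_left hp

theorem Fin.ne_mk_succ (i : Fin n) (h : (i : ℕ) + 1 < n) : i ≠ ⟨i + 1, h⟩ :=
  fun hi => by simpa using congrArg Fin.val hi

theorem posSemidef_HnGen_term (ψs : ℕ → Fin 2 × Fin 2 → ℂ) (i : Fin n) :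
    (if h : (i : ℕ) + 1 < n then twoSite n (vecProj (ψs i)) i ⟨i + 1, h⟩ else 0).PosSemidef := by
  split_ifs with h
  · exact (posSemidef_vecProj _).twoSite (Fin.ne_mk_succ i h)
  · exact .zero

theorem posSemidef_HnGen (ψs : ℕ → Fin 2 × Fin 2 → ℂ) : (HnGen n ψs).PosSemidef :=
  posSemidef_sum _ fun i _ => posSemidef_HnGen_term ψs i

theorem HnGen_mulVec_eq_zero_iff (ψs : ℕ → Fin 2 × Fin 2 → ℂ) (f : (Fin n → Fin 2) → ℂ) :
    HnGen n ψs *ᵥ f = 0 ↔ ∀ (i : Fin n) (h : (i : ℕ) + 1 < n),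
      twoSite n (vecProj (ψs i)) i ⟨i + 1, h⟩ *ᵥ f = 0 := by
  rw [HnGen, PosSemidef.sum_mulVec_eq_zero_iff fun i _ => posSemidef_HnGen_term ψs i]
  refine forall_congr' fun i => ?_
  split_ifs with h <;> simp [h]

theorem HnGen_mulVec_eq_zero_of_contractPair {ψs : ℕ → Fin 2 × Fin 2 → ℂ}
    {f : (Fin n → Fin 2) → ℂ}
    (hf : ∀ (i : Fin n) (h : (i : ℕ) + 1 < n) x, contractPair (ψs i) f i ⟨i + 1, h⟩ x = 0) :
    HnGen n ψs *ᵥ f = 0 :=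
  (HnGen_mulVec_eq_zero_iff ψs f).mpr fun i h => funext fun x => by
    rw [twoSite_vecProj_mulVec _ (Fin.ne_mk_succ i h), hf i h x, mul_zero, Pi.zero_apply]

theorem contractPair_eq_zero_of_HnGen_mulVec {ψs : ℕ → Fin 2 × Fin 2 → ℂ}
    {f : (Fin n → Fin 2) → ℂ} (hf : HnGen n ψs *ᵥ f = 0) (i : Fin n) (h : (i : ℕ) + 1 < n)
    (hψ : ψs i ≠ 0) (x : Fin n → Fin 2) : contractPair (ψs i) f i ⟨i + 1, h⟩ x = 0 :=
  contractPair_eq_zero_of_twoSite_mulVec hψ (Fin.ne_mk_succ i h)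
    ((HnGen_mulVec_eq_zero_iff ψs f).mp hf i h) x

end Contraction

theorem contractPair_prod {n : ℕ} (ψ : Fin 2 × Fin 2 → ℂ) (φ : Fin n → Fin 2 → ℂ) {i j : Fin n}
    (hij : i ≠ j) (x : Fin n → Fin 2) :
    contractPair ψ (fun y => ∏ k, φ k (y k)) i j x =
      (∑ p, star (ψ p) * (φ i p.1 * φ j p.2)) * ∏ k ∈ (univ.erase j).erase i, φ k (x k) := by
  have hi : i ∈ univ.erase j := mem_erase.mpr ⟨hij, mem_univ i⟩
  rw [contractPair, Finset.sum_mul]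
  refine Finset.sum_congr rfl fun p _ => ?_
  rw [← mul_prod_erase _ _ (mem_univ j), ← mul_prod_erase _ _ hi]
  simp only [update₂_apply, if_neg hij, ↓reduceIte]
  rw [Finset.prod_congr rfl fun k hk => ?_]
  · ring
  · obtain ⟨hki, hkj, -⟩ := by simpa only [mem_erase] using hk
    simp [hki, hkj]

theorem sum_star_prod_mul_prod {ι α R : Type*} [Fintype ι] [DecidableEq ι] [Fintype α]
    [CommSemiring R] [StarRing R] (φ χ : ι → α → R) :
    ∑ x : ι → α, star (∏ k, φ k (x k)) * ∏ k, χ k (x k) = ∏ k, ∑ a, star (φ k a) * χ k a := by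
  rw [Finset.prod_univ_sum, Fintype.piFinset_univ]
  simp only [star_prod, Finset.prod_mul_distrib]

theorem sum_star_psiProd_mul (c s : ℂ) (g : Fin 2 × Fin 2 → ℂ) :
    ∑ p, star (psiProd c s p) * g p = s * g (1, 0) - c * g (1, 1) := by
  simp [psiProd, Fintype.sum_prod_type, Fin.sum_univ_two]
  ring

theorem psiProd_ne_zero (c : ℂ) {s : ℂ} (hs : s ≠ 0) : psiProd c s ≠ 0 :=
  Function.ne_iff.mpr ⟨(1, 0), by simpa [psiProd] using hs⟩

def gvecSite (c s : ℂ) (m k : ℕ) : Fin 2 → ℂ :=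
  if k + 1 < m then ![1, 0] else if k + 1 = m then ![star s, -star c] else ![c, s]

theorem gvec_eq_prod (c s : ℂ) (n m : ℕ) (x : Fin n → Fin 2) :
    gvec c s n m x = ∏ k : Fin n, gvecSite c s m k (x k) :=
  Finset.prod_congr rfl fun k _ => by unfold gvecSite; split_ifs <;> rfl

theorem gvecSite_overlap_psiProd_eq_zero (c s : ℂ) (m k : ℕ) :
    s * (gvecSite c s m k 1 * gvecSite c s m (k + 1) 0) -
      c * (gvecSite c s m k 1 * gvecSite c s m (k + 1) 1) = 0 := by
  unfold gvecSite
  split_ifs <;> first | omega | (simp <;> ring)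

theorem gvec_mem_ker (c s : ℂ) (n m : ℕ) :
    gvec c s n m ∈ LinearMap.ker (Hn n (psiProd c s)).mulVecLin := by
  refine HnGen_mulVec_eq_zero_of_contractPair fun i h x => ?_
  rw [funext (gvec_eq_prod c s n m), contractPair_prod _ _ (Fin.ne_mk_succ i h),
    sum_star_psiProd_mul, gvecSite_overlap_psiProd_eq_zero, zero_mul]

theorem gvecSite_normalized {c s : ℂ} (hcs : Complex.normSq c + Complex.normSq s = 1)
    (m k : ℕ) : ∑ a, star (gvecSite c s m k a) * gvecSite c s m k a = 1 := by
  have hcs' : starRingEnd ℂ c * c + starRingEnd ℂ s * s = 1 := by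
    simp only [← Complex.normSq_eq_conj_mul_self]
    exact_mod_cast hcs
  unfold gvecSite
  split_ifs <;> simp [Fin.sum_univ_two] <;> linear_combination hcs'

theorem gvecSite_orthogonal (c s : ℂ) {m k : ℕ} (hm : m < k + 1) :
    ∑ a, star (gvecSite c s m k a) * gvecSite c s (k + 1) k a = 0 := by
  simp [gvecSite, Fin.sum_univ_two, show ¬k + 1 < m by omega, show k + 1 ≠ m by omega]
  ring

theorem gvec_orthonormal {c s : ℂ} (hcs : Complex.normSq c + Complex.normSq s = 1) {n i j : ℕ}
    (hi : i ≤ n) (hj : j ≤ n) :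
    ∑ x, star (gvec c s n i x) * gvec c s n j x = if i = j then 1 else 0 := by
  simp only [gvec_eq_prod, sum_star_prod_mul_prod]
  have horth : ∀ {i j : ℕ}, i < j → j ≤ n →
      ∏ k : Fin n, ∑ a, star (gvecSite c s i k a) * gvecSite c s j k a = 0 := by
    intro i j hij hj
    obtain ⟨k, rfl⟩ : ∃ k, j = k + 1 := ⟨j - 1, by omega⟩
    exact prod_eq_zero (mem_univ (⟨k, by omega⟩ : Fin n)) (gvecSite_orthogonal c s hij)
  rcases lt_trichotomy i j with h | rfl | h
  · rw [horth h hj, if_neg h.ne]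
  · rw [if_pos rfl]
    exact prod_eq_one fun k _ => gvecSite_normalized hcs i k
  · rw [if_neg h.ne', ← star_eq_zero, star_prod, ← horth h hi]
    simp only [star_sum, star_mul', star_star, mul_comm]

theorem linearIndependent_of_sum_star_mul_eq_ite {ι α K : Type*} [Fintype α] [DecidableEq ι]
    [Field K] [StarRing K] {v : ι → α → K}
    (hv : ∀ i j, ∑ x, star (v i x) * v j x = if i = j then 1 else 0) :
    LinearIndependent K v := by
  refine linearIndependent_iff'.mpr fun t g hg i hi => ?_
  have h := congrArg (star (v i) ⬝ᵥ ·) hg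
  simp only [dotProduct_sum, dotProduct_smul, dotProduct_zero] at h
  simpa [dotProduct, hv, hi] using h

theorem finrank_span_gvec {c s : ℂ} (hcs : Complex.normSq c + Complex.normSq s = 1) (n : ℕ) :
    Module.finrank ℂ (Submodule.span ℂ (gvec c s n '' Set.Iic n)) = n + 1 := by
  have hind : LinearIndependent ℂ fun i : Set.Iic n => gvec c s n i :=
    linearIndependent_of_sum_star_mul_eq_ite fun i j => by
      simpa only [Subtype.ext_iff] using gvec_orthonormal hcs i.2 j.2
  rw [Set.image_eq_range, finrank_span_eq_card hind]
  simp

def wallConfig (n k : ℕ) : Fin n → Fin 2 := fun p => if (p : ℕ) < k then 0 else 1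

theorem Fin.monotone_of_le_next {n : ℕ} {α : Type*} [Preorder α] {x : Fin n → α}
    (hx : ∀ (i : Fin n) (h : (i : ℕ) + 1 < n), x i ≤ x ⟨i + 1, h⟩) : Monotone x := by
  cases n with
  | zero => exact fun a => a.elim0
  | succ n => exact Fin.monotone_iff_le_succ.mpr fun i => hx i.castSucc (by simp)

theorem exists_eq_wallConfig_of_monotone {n : ℕ} {x : Fin n → Fin 2} (hx : Monotone x) :
    ∃ k ≤ n, x = wallConfig n k := by
  set k := #{p | x p = 0}
  have hzero : ∀ p, x p = 0 → (p : ℕ) < k := fun p hp => by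
    have : Iic p ⊆ ({q | x q = 0} : Finset (Fin n)) := fun q hq => by
      simpa using le_antisymm ((hx (mem_Iic.mp hq)).trans hp.le) (Fin.zero_le _)
    simpa using card_le_card this
  have hone : ∀ p, x p = 1 → k ≤ (p : ℕ) := fun p hp => by
    have : ({q | x q = 0} : Finset (Fin n)) ⊆ Iio p := fun q hq => by
      by_contra hpq
      have := hx (not_lt.mp (mem_Iio.not.mp hpq))
      simp_all
    simpa using card_le_card this
  refine ⟨k, card_filter_le _ _ |>.trans (by simp), funext fun p => ?_⟩
  rcases Fin.exists_fin_two.mp ⟨x p, rfl⟩ with hp | hp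
  · simp [wallConfig, hp, hzero p hp]
  · simp [wallConfig, hp, not_lt.mpr (hone p hp)]

theorem card_filter_update_lt {ι β : Type*} [Fintype ι] [DecidableEq ι] [DecidableEq β]
    {x : ι → β} {j : ι} {a b : β} (hj : x j = a) (hab : b ≠ a) :
    #{p | Function.update x j b p = a} < #{p | x p = a} := by
  refine card_lt_card ⟨fun p hp => ?_, fun h => ?_⟩
  · have hpj : p ≠ j := by rintro rfl; simp_all
    simpa [Function.update_of_ne hpj] using hp
  · simpa [hab] using h (by simpa using hj : j ∈ _)

theorem eq_zero_of_forall_wallConfig {c s : ℂ} (hs : s ≠ 0) {n : ℕ} {f : (Fin n → Fin 2) → ℂ}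
    (hf : ∀ (i : Fin n) (h : (i : ℕ) + 1 < n) x, contractPair (psiProd c s) f i ⟨i + 1, h⟩ x = 0)
    (hw : ∀ k ≤ n, f (wallConfig n k) = 0) (x : Fin n → Fin 2) : f x = 0 := by
  by_cases hdesc : ∃ (i : Fin n) (h : (i : ℕ) + 1 < n), x i = 1 ∧ x ⟨i + 1, h⟩ = 0
  · obtain ⟨i, h, hi, hj⟩ := hdesc
    set j : Fin n := ⟨i + 1, h⟩
    have h10 : update₂ x i j (1, 0) = x := by rw [← hi, ← hj, update₂_self]
    have h11 : update₂ x i j (1, 1) = Function.update x j 1 := by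
      rw [update₂, show Function.update x i 1 = x from Function.update_eq_self_iff.mpr hi.symm]
    have hstep : s * f x = c * f (Function.update x j 1) := by
      have := hf i h x
      rwa [contractPair, sum_star_psiProd_mul, h10, h11, sub_eq_zero] at this
    have hlt : #{p | Function.update x j 1 p = 0} < #{p | x p = 0} :=
      card_filter_update_lt hj (by decide)
    rw [eq_zero_of_forall_wallConfig hs hf hw (Function.update x j 1), mul_zero] at hstep
    exact (mul_eq_zero.mp hstep).resolve_left hs
  · push Not at hdesc
    obtain ⟨k, hk, rfl⟩ := exists_eq_wallConfig_of_monotone <|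
      Fin.monotone_of_le_next (x := x) fun i h => by have := hdesc i h; omega
    exact hw k hk
termination_by #{p | x p = 0}

theorem finrank_ker_Hn_psiProd_le (c : ℂ) {s : ℂ} (hs : s ≠ 0) (n : ℕ) :
    Module.finrank ℂ (LinearMap.ker (Hn n (psiProd c s)).mulVecLin) ≤ n + 1 := by
  let evalWalls : ((Fin n → Fin 2) → ℂ) →ₗ[ℂ] Fin (n + 1) → ℂ :=
    LinearMap.pi fun k => LinearMap.proj (wallConfig n k)
  have hinj :
      Function.Injective (evalWalls ∘ₗ (LinearMap.ker (Hn n (psiProd c s)).mulVecLin).subtype) := by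
    rw [← LinearMap.ker_eq_bot, LinearMap.ker_eq_bot']
    rintro ⟨f, hf⟩ hwalls
    refine Subtype.ext <| funext <| eq_zero_of_forall_wallConfig hs
      (fun i h => contractPair_eq_zero_of_HnGen_mulVec hf i h (psiProd_ne_zero c hs))
      fun k hk => congrFun hwalls ⟨k, Nat.lt_succ_of_le hk⟩
  simpa using LinearMap.finrank_le_finrank_of_injective hinj

theorem ker_Hn_psiProd_eq_span {c s : ℂ} (hcs : Complex.normSq c + Complex.normSq s = 1)
    (hs : s ≠ 0) (n : ℕ) :
    LinearMap.ker (Hn n (psiProd c s)).mulVecLin = Submodule.span ℂ (gvec c s n '' Set.Iic n) := by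
  refine (Submodule.eq_of_le_of_finrank_le ?_ ?_).symm
  · exact Submodule.span_le.mpr <| Set.image_subset_iff.mpr fun m _ => gvec_mem_ker c s n m
  · rw [finrank_span_gvec hcs]
    exact finrank_ker_Hn_psiProd_le c hs n

theorem ground_space_product_case (c s : ℂ)
    (hcs : Complex.normSq c + Complex.normSq s = 1) (hs : s ≠ 0)
    (n : ℕ) :
    (∀ i ≤ n, gvec c s n i ∈ LinearMap.ker (Hn n (psiProd c s)).mulVecLin) ∧
    (∀ i ≤ n, ∀ j ≤ n,
      (∑ x : Fin n → Fin 2, star (gvec c s n i x) * gvec c s n j x) =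
        if i = j then 1 else 0) ∧
    LinearMap.ker (Hn n (psiProd c s)).mulVecLin =
      Submodule.span ℂ (gvec c s n '' Set.Iic n) ∧
    Module.finrank ℂ (LinearMap.ker (Hn n (psiProd c s)).mulVecLin) = n + 1 ∧
    (0 : ℂ) ∈ spectrum ℂ (Hn n (psiProd c s)) ∧
    (∀ z ∈ spectrum ℂ (Hn n (psiProd c s)), 0 ≤ z.re ∧ z.im = 0) := by
  have hker := ker_Hn_psiProd_eq_span hcs hs n
  have hg₀ : gvec c s n 0 ≠ 0 := fun h => by
    simpa [h] using gvec_orthonormal hcs (Nat.zero_le n) (Nat.zero_le n)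
  refine ⟨fun i _ => gvec_mem_ker c s n i, fun i hi j hj => gvec_orthonormal hcs hi hj, hker,
    hker ▸ finrank_span_gvec hcs n, zero_mem_spectrum_of_mulVec_eq_zero hg₀ (gvec_mem_ker c s n 0),
    fun z hz => ?_⟩
  obtain ⟨hre, him⟩ := Complex.nonneg_iff.mp
    ((posSemidef_iff_isHermitian_and_spectrum_nonneg.mp (posSemidef_HnGen _)).2 hz)
  exact ⟨hre, him.symm⟩
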